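/- Let H be a complex vector space and x_1,...,x_n ∈ H with dim span{x_1,...,x_n} = r where 0 < r < n. Then there exist a lower triangular (n−r)×(n−r) complex matrix L with all diagonal entries equal to 1 and all entries of modulus at most 1, a complex r×(n−r) matrix B with all entries of modulus at most 1, and a permutation σ of {1,...,n}, such that span{x_{σ(n−r+1)},...,x_{σ(n)}} = span{x_1,...,x_n} and (x_{σ(1)},...,x_{σ(n)}) · [L; B] = 0, where [L; B] is the n×(n−r) block matrix with L on top of B. -/

import Mathlib

/-!
Fix any basis of `span {x_i}` and choose `r` of the vectors, `x_{t(1)}, …, x_{t(r)}`, whose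
determinant has maximal modulus; it is nonzero, so they form a basis. By Cramer's rule the
coordinate of `x_p` on `x_{t(k)}` is the determinant with `x_{t(k)}` replaced by `x_p` divided
by the maximal one, hence has modulus at most `1`. Moving the chosen vectors to the last `r`
positions, `L = 1` and `B = -(coordinates)` give the required relations.
-/

open Module Submodule Set Function

section MaxVolume

variable {𝕜 V ι κ : Type*} [NormedField 𝕜] [AddCommGroup V] [Module 𝕜 V]

theorem exists_linearIndependent_comp_of_span_eq_top {x : ι → V}
    (hx : span 𝕜 (range x) = ⊤) (b : Basis κ 𝕜 V) :
    ∃ t : κ → ι, LinearIndependent 𝕜 (x ∘ t) := by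
  obtain ⟨s, a, -, hspan, hli⟩ := exists_linearIndependent' 𝕜 x
  let e : s ≃ κ := (Basis.mk hli (hspan.trans hx).ge).indexEquiv b
  exact ⟨a ∘ e.symm, hli.comp e.symm e.symm.injective⟩

variable [Fintype κ] [DecidableEq κ]

theorem norm_coord_le_one_of_norm_det_update_le (b : Basis κ 𝕜 V) {y : κ → V}
    (hli : LinearIndependent 𝕜 y) (hsp : ⊤ ≤ span 𝕜 (range y)) {k : κ} {v : V}
    (h : ‖b.det (update y k v)‖ ≤ ‖b.det y‖) :
    ‖(Basis.mk hli hsp).coord k v‖ ≤ 1 := by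
  have hdet : 0 < ‖b.det y‖ :=
    norm_pos_iff.mpr ((b.is_basis_iff_det.mp ⟨hli, top_le_iff.mp hsp⟩).ne_zero)
  have cramer := congr($(b.det_smul_mk_coord_eq_det_update hli hsp k) v)
  change b.det y * _ = b.det (update y k v) at cramer
  rw [← cramer, norm_mul] at h
  exact le_of_mul_le_mul_left (by simpa using h) hdet

theorem exists_comp_span_eq_top_norm_coeff_le_one [Finite ι] {x : ι → V}
    (hx : span 𝕜 (range x) = ⊤) (b : Basis κ 𝕜 V) :
    ∃ t : κ → ι, LinearIndependent 𝕜 (x ∘ t) ∧ span 𝕜 (range (x ∘ t)) = ⊤ ∧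
      ∀ p, ∃ c : κ → 𝕜, (∀ k, ‖c k‖ ≤ 1) ∧ ∑ k, c k • x (t k) = x p := by
  obtain ⟨t₁, hli₁⟩ := exists_linearIndependent_comp_of_span_eq_top hx b
  have : Nonempty (κ → ι) := ⟨t₁⟩
  obtain ⟨t, hmax⟩ := Finite.exists_max fun t : κ → ι => ‖b.det (x ∘ t)‖
  have hdet : b.det (x ∘ t) ≠ 0 := by
    have : FiniteDimensional 𝕜 V := .of_basis b
    have hsp₁ := hli₁.span_eq_top_of_card_eq_finrank' (finrank_eq_card_basis b).symm
    exact norm_pos_iff.mp <| (norm_pos_iff.mpr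
      (b.is_basis_iff_det.mp ⟨hli₁, hsp₁⟩).ne_zero).trans_le (hmax t₁)
  obtain ⟨hli, hsp⟩ := b.is_basis_iff_det.mpr (isUnit_iff_ne_zero.mpr hdet)
  refine ⟨t, hli, hsp, fun p => ⟨(Basis.mk hli hsp.ge).repr (x p), fun k => ?_, ?_⟩⟩
  · refine norm_coord_le_one_of_norm_det_update_le b hli hsp.ge ?_
    rw [← comp_update]
    exact hmax _
  · simpa using (Basis.mk hli hsp.ge).sum_repr (x p)

theorem exists_comp_span_eq_norm_coeff_le_one {H : Type*} [AddCommGroup H] [Module 𝕜 H]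
    [Finite ι] (x : ι → H) {r : ℕ} (hdim : finrank 𝕜 (span 𝕜 (range x)) = r) :
    ∃ t : Fin r → ι, Injective t ∧ span 𝕜 (range (x ∘ t)) = span 𝕜 (range x) ∧
      ∀ p, ∃ c : Fin r → 𝕜, (∀ k, ‖c k‖ ≤ 1) ∧ ∑ k, c k • x (t k) = x p := by
  set W := span 𝕜 (range x)
  have : FiniteDimensional 𝕜 W := FiniteDimensional.span_of_finite 𝕜 (finite_range x)
  let x' : ι → W := codRestrict x W fun i => subset_span (mem_range_self i)
  have hx' : span 𝕜 (range x') = ⊤ := by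
    apply map_injective_of_injective W.injective_subtype
    rw [map_span, Submodule.map_top, range_subtype, ← range_comp]
    rfl
  obtain ⟨t, hli, hsp, hcoef⟩ :=
    exists_comp_span_eq_top_norm_coeff_le_one hx' (finBasisOfFinrankEq 𝕜 W hdim)
  refine ⟨t, hli.injective.of_comp, ?_, fun p => ?_⟩
  · simpa [x', map_span, ← range_comp, comp_def] using congr(map W.subtype $hsp)
  · obtain ⟨c, hc, hsum⟩ := hcoef p
    exact ⟨c, hc, by simpa [x'] using congr(W.subtype $hsum)⟩

end MaxVolume

theorem stmt3 {H : Type*} [AddCommGroup H] [Module ℂ H]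
    (n r : ℕ) (hrn : r < n) (x : Fin n → H)
    (hdim : Module.finrank ℂ ↥(Submodule.span ℂ (Set.range x)) = r) :
    ∃ (L : Matrix (Fin (n - r)) (Fin (n - r)) ℂ) (B : Matrix (Fin r) (Fin (n - r)) ℂ)
      (σ : Equiv.Perm (Fin n)),
      (∀ i j : Fin (n - r), i < j → L i j = 0) ∧
      (∀ i : Fin (n - r), L i i = 1) ∧
      (∀ i j, ‖L i j‖ ≤ 1) ∧
      (∀ i j, ‖B i j‖ ≤ 1) ∧
      (Submodule.span ℂ
          (Set.range fun i : Fin r => x (σ ⟨n - r + (i : ℕ), by have := i.isLt; omega⟩)) =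
        Submodule.span ℂ (Set.range x)) ∧
      (∀ j : Fin (n - r),
        (∑ i : Fin (n - r), L i j • x (σ ⟨(i : ℕ), by have := i.isLt; omega⟩)) +
          (∑ i : Fin r, B i j • x (σ ⟨n - r + (i : ℕ), by have := i.isLt; omega⟩)) = 0) := by
  obtain ⟨t, ht, hspan, hcoef⟩ := exists_comp_span_eq_norm_coeff_le_one x hdim
  choose c hc hsum using hcoef
  let tail : Fin r → Fin n := fun i => ⟨n - r + i, by omega⟩
  obtain ⟨σ, hσ⟩ := Equiv.Perm.exists_extending_pair tail t
    (fun i j h => Fin.ext (by simpa [tail] using congr_arg Fin.val h)) ht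
  have hσ_tail (i : Fin r) (hi : n - r + i < n) : σ ⟨n - r + i, hi⟩ = t i := hσ i
  refine ⟨1, Matrix.of fun k j => -c (σ ⟨j, by omega⟩) k, σ,
    fun i j hij => Matrix.one_apply_ne hij.ne, Matrix.one_apply_eq, fun i j => ?_,
    fun k j => by simpa using hc _ k, by simp only [hσ_tail, ← hspan]; rfl, fun j => ?_⟩
  · rw [Matrix.one_apply]
    split_ifs <;> simp
  · simp [Matrix.one_apply, ite_smul, hσ_tail, hsum]
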